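/- If (x, y, z₁, z₂) ∈ U and u(x, y, z₁, z₂) ≤ 0, then w(x, y, z₁, z₂) ≤ 16. -/

import Mathlib

noncomputable section

/-- The quantity `u` from the dimensionless formulation of the compactness bound. -/
def u (x y z₁ z₂ : ℝ) : ℝ :=
  3 * x ^ 2 + (y - z₁ - z₂) ^ 2 - 2 * (x - y) - 2 * (z₂ * (4 * x - 3) + z₁)

/-- The quantity `w` from the dimensionless formulation of the compactness bound
(defined for `x < 1`). -/
def w (x y z₁ z₂ : ℝ) : ℝ :=
  (4 - 3 * x + y - z₁ - z₂) ^ 2 / (1 - x)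

/-!
With `a = y - z₁ - z₂ + 1` and `t = 1 - x`, one has
`u = a² - (4 - 3t) t + 8 z₂ t` and `w = (a + 3t)² / t`. So `u ≤ 0` forces `a² ≤ (4 - 3t) t`,
and since `(4 - 3t) t ≤ (2 - t)²` this gives `a + t ≤ 2`; then
`(a + 3t)² ≤ (4 - 3t) t + 6 a t + 9 t² = 4t + 6t (a + t) ≤ 16 t`.
-/

theorem u_eq (x y z₁ z₂ : ℝ) :
    u x y z₁ z₂ = (y - z₁ - z₂ + 1) ^ 2 - (4 - 3 * (1 - x)) * (1 - x) + 8 * z₂ * (1 - x) := by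
  unfold u; ring

theorem w_eq (x y z₁ z₂ : ℝ) :
    w x y z₁ z₂ = (y - z₁ - z₂ + 1 + 3 * (1 - x)) ^ 2 / (1 - x) := by
  unfold w; ring_nf

theorem add_le_two_of_sq_le {a t : ℝ} (ht : t ≤ 2) (h : a ^ 2 ≤ (4 - 3 * t) * t) : a + t ≤ 2 := by
  have hsq : a ^ 2 ≤ (2 - t) ^ 2 := h.trans (by nlinarith [sq_nonneg (1 - t)])
  linarith [abs_le_of_sq_le_sq' hsq (by linarith)]

theorem sq_add_three_mul_le {a t : ℝ} (ht : t ≤ 2) (h : a ^ 2 ≤ (4 - 3 * t) * t) :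
    (a + 3 * t) ^ 2 ≤ 16 * t := by
  have hat := add_le_two_of_sq_le ht h
  have ht0 : 0 ≤ t := by nlinarith [sq_nonneg a]
  nlinarith [mul_le_mul_of_nonneg_left hat ht0]

theorem w_le_sixteen_of_u_nonpos_general (x y z₁ z₂ : ℝ)
    (hx0 : 0 ≤ x) (hx1 : x < 1) (hz₂ : 0 ≤ z₂)
    (hu : u x y z₁ z₂ ≤ 0) :
    w x y z₁ z₂ ≤ 16 := by
  have ht : 0 < 1 - x := by linarith
  have ha : (y - z₁ - z₂ + 1) ^ 2 ≤ (4 - 3 * (1 - x)) * (1 - x) := by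
    rw [u_eq] at hu
    linarith [mul_nonneg hz₂ ht.le]
  rw [w_eq, div_le_iff₀ ht]
  exact sq_add_three_mul_le (by linarith) ha

theorem w_le_sixteen_of_u_nonpos (x y z₁ z₂ : ℝ)
    (hx0 : 0 ≤ x) (hx1 : x < 1) (hy : 0 ≤ y) (hz₁ : 0 ≤ z₁) (hz₂ : 0 ≤ z₂)
    (hz : z₁ + z₂ ≤ 1) (hu : u x y z₁ z₂ ≤ 0) :
    w x y z₁ z₂ ≤ 16 :=
  w_le_sixteen_of_u_nonpos_general x y z₁ z₂ hx0 hx1 hz₂ hu
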